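/- arXiv:1710.02390 — 8 statements merged into one kernel-verified Lean document; each statement's English description precedes it below -/
import Mathlib

section
/- The map (h, k) ↦ (k⁻¹ ▷ h⁻¹, k⁻¹) is a bijection from W(g₁, g₂) = {(h,k) ∈ H × G : ∂(h) = g₁ k g₂⁻¹ k⁻¹} to W(g₂, g₁), and it is an involution in the sense that applying the same formula twice returns the original pair. -/
/-- The map (h, k) ↦ (k⁻¹ ▷ h⁻¹, k⁻¹) is a bijection W(g₁,g₂) → W(g₂,g₁), and
applying the same formula twice returns the original pair. -/
theorem twoConj_bijection
    {G H : Type*} [Group G] [Group H]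
    (δ : H →* G) (act : G →* MulAut H)
    (peiffer1 : ∀ (g : G) (h : H), δ (act g h) = g * δ h * g⁻¹)
    (peiffer2 : ∀ h₁ h₂ : H, act (δ h₁) h₂ = h₁ * h₂ * h₁⁻¹)
    (g₁ g₂ : G) :
    -- the map is well-defined into W(g₂, g₁)
    (∀ (h : H) (k : G), δ h = g₁ * k * g₂⁻¹ * k⁻¹ →
      δ (act k⁻¹ h⁻¹) = g₂ * k⁻¹ * g₁⁻¹ * (k⁻¹)⁻¹) ∧
    -- it gives a bijection between the two sets of witnesses
    (∃ φ : {p : H × G // δ p.1 = g₁ * p.2 * g₂⁻¹ * p.2⁻¹} ≃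
           {p : H × G // δ p.1 = g₂ * p.2 * g₁⁻¹ * p.2⁻¹},
      ∀ p, (φ p : H × G) = (act (p : H × G).2⁻¹ (p : H × G).1⁻¹, (p : H × G).2⁻¹)) ∧
    -- applying the formula twice is the identity
    (∀ (h : H) (k : G), (act (k⁻¹)⁻¹ (act k⁻¹ h⁻¹)⁻¹, (k⁻¹)⁻¹) = (h, k)) := by
  have wd : ∀ (a b : G) (h : H) (k : G), δ h = a * k * b⁻¹ * k⁻¹ →
      δ (act k⁻¹ h⁻¹) = b * k⁻¹ * a⁻¹ * (k⁻¹)⁻¹ := by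
    intro a b h k hh
    have : δ (act k⁻¹ h⁻¹) = k⁻¹ * (δ h)⁻¹ * k := by
      rw [peiffer1, map_inv]; group
    rw [this, hh]; group
  have invol : ∀ (h : H) (k : G), act (k⁻¹)⁻¹ (act k⁻¹ h⁻¹)⁻¹ = h := by
    intro h k
    rw [← map_inv (act k⁻¹), inv_inv, inv_inv]
    have : act k (act k⁻¹ h) = act (k * k⁻¹) h := by
      rw [map_mul]; rfl
    rw [this, mul_inv_cancel, map_one]; rfl
  refine ⟨wd g₁ g₂, ⟨⟨fun p => ⟨(act p.1.2⁻¹ p.1.1⁻¹, p.1.2⁻¹), wd g₁ g₂ _ _ p.2⟩,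
    fun p => ⟨(act p.1.2⁻¹ p.1.1⁻¹, p.1.2⁻¹), wd g₂ g₁ _ _ p.2⟩, ?_, ?_⟩, fun p => rfl⟩,
    fun h k => by rw [invol, inv_inv]⟩
  · rintro ⟨⟨h, k⟩, hp⟩; simp [invol h k]
  · rintro ⟨⟨h, k⟩, hp⟩; simp [invol h k]
end

section
/- For all g₁, g₂ ∈ G, C(g₁, g₂) = C(g₂, g₁), where C(g₁, g₂) is the number of pairs (h, k) ∈ H × G with ∂(h) = g₁ k g₂⁻¹ k⁻¹. -/
private lemma C_symm_aux {G H : Type*} [Group G] [Group H]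
    (δ : H →* G) (act : G →* MulAut H)
    (peiffer1 : ∀ (g : G) (h : H), δ (act g h) = g * δ h * g⁻¹)
    {a b k : G} {h : H} (hp : δ h = a * k * b⁻¹ * k⁻¹) :
    δ (act k⁻¹ h⁻¹) = b * k⁻¹ * a⁻¹ * k⁻¹⁻¹ := by
  rw [show act k⁻¹ h⁻¹ = act k⁻¹ h⁻¹ from rfl, peiffer1, map_inv, hp]
  group

/-- C(g₁, g₂) = C(g₂, g₁). -/
theorem C_symm
    {G H : Type*} [Group G] [Group H] [Finite G] [Finite H]
    (δ : H →* G) (act : G →* MulAut H)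
    (peiffer1 : ∀ (g : G) (h : H), δ (act g h) = g * δ h * g⁻¹)
    (peiffer2 : ∀ h₁ h₂ : H, act (δ h₁) h₂ = h₁ * h₂ * h₁⁻¹)
    (g₁ g₂ : G) :
    Nat.card {p : H × G // δ p.1 = g₁ * p.2 * g₂⁻¹ * p.2⁻¹} =
    Nat.card {p : H × G // δ p.1 = g₂ * p.2 * g₁⁻¹ * p.2⁻¹} := by
  apply Nat.card_congr
  refine ⟨fun ⟨⟨h, k⟩, hp⟩ => ⟨(act k⁻¹ h⁻¹, k⁻¹), C_symm_aux δ act peiffer1 hp⟩,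
          fun ⟨⟨h, k⟩, hp⟩ => ⟨(act k⁻¹ h⁻¹, k⁻¹), C_symm_aux δ act peiffer1 hp⟩, ?_, ?_⟩
  · rintro ⟨⟨h, k⟩, hp⟩; simp
  · rintro ⟨⟨h, k⟩, hp⟩; simp
end

section
/- If g₁ is 2-conjugate to g₂ (i.e. C(g₁, g₂) ≠ 0), then C(g₁, g₂) = C(g₁, g₁). -/
/-- If g₁ is 2-conjugate to g₂ (i.e. C(g₁,g₂) ≠ 0), then C(g₁,g₂) = C(g₁,g₁). -/
theorem C_eq_of_twoConj
    {G H : Type*} [Group G] [Group H] [Finite G] [Finite H]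
    (δ : H →* G) (act : G →* MulAut H)
    (peiffer1 : ∀ (g : G) (h : H), δ (act g h) = g * δ h * g⁻¹)
    (peiffer2 : ∀ h₁ h₂ : H, act (δ h₁) h₂ = h₁ * h₂ * h₁⁻¹)
    (g₁ g₂ : G)
    (hne : Nat.card {p : H × G // δ p.1 = g₁ * p.2 * g₂⁻¹ * p.2⁻¹} ≠ 0) :
    Nat.card {p : H × G // δ p.1 = g₁ * p.2 * g₂⁻¹ * p.2⁻¹} =
    Nat.card {p : H × G // δ p.1 = g₁ * p.2 * g₁⁻¹ * p.2⁻¹} := by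
  obtain ⟨⟨⟨h₀, k₀⟩, hk₀⟩⟩ := (Nat.card_ne_zero.mp hne).1
  apply Nat.card_congr
  refine ⟨fun p => ⟨(p.1.1 * (act (p.1.2 * k₀⁻¹) h₀)⁻¹, p.1.2 * k₀⁻¹), ?_⟩,
          fun p => ⟨(p.1.1 * act p.1.2 h₀, p.1.2 * k₀), ?_⟩, ?_, ?_⟩
  · obtain ⟨⟨h, k⟩, hp⟩ := p
    show δ (h * (act (k * k₀⁻¹) h₀)⁻¹) = _
    rw [map_mul, map_inv, peiffer1, hp, hk₀]
    group
  · obtain ⟨⟨h, k⟩, hp⟩ := p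
    show δ (h * act k h₀) = _
    rw [map_mul, peiffer1, hp, hk₀]
    group
  · rintro ⟨⟨h, k⟩, hp⟩
    ext <;> simp [mul_assoc]
  · rintro ⟨⟨h, k⟩, hp⟩
    ext <;> simp [mul_assoc]
end

section
/- For all g, j ∈ G, the sum over i ∈ G of C(g, i) · C(i, j) equals |H| · |G| · C(g, j), where C(g₁, g₂) = #{(h,k) ∈ H × G : ∂(h) = g₁ k g₂⁻¹ k⁻¹}. -/
open Finset

/-- Σ_{i ∈ G} C(g, i) · C(i, j) = |H| · |G| · C(g, j). -/
theorem sum_C_mul_C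
    {G H : Type*} [Group G] [Group H] [Fintype G] [Fintype H]
    (δ : H →* G) (act : G →* MulAut H)
    (peiffer1 : ∀ (g : G) (h : H), δ (act g h) = g * δ h * g⁻¹)
    (peiffer2 : ∀ h₁ h₂ : H, act (δ h₁) h₂ = h₁ * h₂ * h₁⁻¹)
    (g j : G) :
    ∑ i : G, Nat.card {p : H × G // δ p.1 = g * p.2 * i⁻¹ * p.2⁻¹} *
             Nat.card {p : H × G // δ p.1 = i * p.2 * j⁻¹ * p.2⁻¹} =
      Nat.card H * Nat.card G *
        Nat.card {p : H × G // δ p.1 = g * p.2 * j⁻¹ * p.2⁻¹} := by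
  classical
  -- invariance of C(·, j) under g ↦ k⁻¹ (δ h)⁻¹ g k
  have key : ∀ (h : H) (k : G),
      Nat.card {p : H × G // δ p.1 = (k⁻¹ * (δ h)⁻¹ * g * k) * p.2 * j⁻¹ * p.2⁻¹} =
      Nat.card {p : H × G // δ p.1 = g * p.2 * j⁻¹ * p.2⁻¹} := by
    intro h k
    apply Nat.card_congr
    refine ⟨fun p => ⟨(h * act k p.1.1, k * p.1.2), ?_⟩,
            fun q => ⟨(act k⁻¹ (h⁻¹ * q.1.1), k⁻¹ * q.1.2), ?_⟩, ?_, ?_⟩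
    · have hp := p.2
      simp only [map_mul, peiffer1, hp]
      group
    · have hq := q.2
      simp only [map_mul, peiffer1, hq, map_inv δ]
      group
    · rintro ⟨⟨x, y⟩, hxy⟩
      simp [map_inv, mul_assoc]
    · rintro ⟨⟨x, y⟩, hxy⟩
      simp [map_inv, mul_assoc]
  have card_eq : ∀ (a b : G),
      Nat.card {p : H × G // δ p.1 = a * p.2 * b⁻¹ * p.2⁻¹} =
      ∑ p : H × G, if δ p.1 = a * p.2 * b⁻¹ * p.2⁻¹ then 1 else 0 := by
    intro a b
    rw [Nat.card_eq_fintype_card, Fintype.card_subtype, Finset.card_filter]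
  have hiff : ∀ (i : G) (p : H × G),
      (δ p.1 = g * p.2 * i⁻¹ * p.2⁻¹) ↔ i = p.2⁻¹ * (δ p.1)⁻¹ * g * p.2 := by
    intro i p
    constructor
    · intro hp; rw [hp]; group
    · intro hp; rw [hp]; group
  calc ∑ i : G, Nat.card {p : H × G // δ p.1 = g * p.2 * i⁻¹ * p.2⁻¹} *
             Nat.card {p : H × G // δ p.1 = i * p.2 * j⁻¹ * p.2⁻¹}
      = ∑ i : G, ∑ p : H × G, (if δ p.1 = g * p.2 * i⁻¹ * p.2⁻¹ then 1 else 0) *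
             Nat.card {q : H × G // δ q.1 = i * q.2 * j⁻¹ * q.2⁻¹} := by
        simp only [card_eq g, Finset.sum_mul]
    _ = ∑ p : H × G, ∑ i : G, (if i = p.2⁻¹ * (δ p.1)⁻¹ * g * p.2 then
             Nat.card {q : H × G // δ q.1 = i * q.2 * j⁻¹ * q.2⁻¹} else 0) := by
        rw [Finset.sum_comm]
        simp only [hiff, ite_mul, one_mul, zero_mul]
    _ = ∑ p : H × G, Nat.card {q : H × G //
          δ q.1 = (p.2⁻¹ * (δ p.1)⁻¹ * g * p.2) * q.2 * j⁻¹ * q.2⁻¹} := by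
        refine Finset.sum_congr rfl fun p _ => ?_
        rw [Finset.sum_ite_eq' Finset.univ]
        simp
    _ = ∑ _p : H × G, Nat.card {q : H × G // δ q.1 = g * q.2 * j⁻¹ * q.2⁻¹} := by
        exact Finset.sum_congr rfl fun p _ => key p.1 p.2
    _ = Nat.card H * Nat.card G *
          Nat.card {p : H × G // δ p.1 = g * p.2 * j⁻¹ * p.2⁻¹} := by
        simp [Finset.sum_const, Nat.card_eq_fintype_card, Fintype.card_prod, mul_assoc,
          mul_comm (Fintype.card H)]
end

section
/- For any g ∈ G, the number of elements in the 2-conjugacy class of g equals |G| · |H| / C(g, g), i.e. (# of elements 2-conjugate to g) · C(g, g) = |G| · |H|. -/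
/-- The size of the 2-conjugacy class of g times C(g,g) equals |G| · |H|. -/
theorem card_twoConjClass_mul_C
    {G H : Type*} [Group G] [Group H] [Finite G] [Finite H]
    (δ : H →* G) (act : G →* MulAut H)
    (peiffer1 : ∀ (g : G) (h : H), δ (act g h) = g * δ h * g⁻¹)
    (peiffer2 : ∀ h₁ h₂ : H, act (δ h₁) h₂ = h₁ * h₂ * h₁⁻¹)
    (g : G) :
    Nat.card {g' : G // Nat.card {p : H × G // δ p.1 = g * p.2 * g'⁻¹ * p.2⁻¹} ≠ 0} *
      Nat.card {p : H × G // δ p.1 = g * p.2 * g⁻¹ * p.2⁻¹} =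
      Nat.card G * Nat.card H := by
  classical
  letI K := SemidirectProduct H G act
  letI : MulAction K G :=
    { smul := fun p x => δ p.left * (p.right * x * p.right⁻¹)
      one_smul := fun x => by
        show δ (1 : H) * ((1 : G) * x * (1 : G)⁻¹) = x
        simp
      mul_smul := fun p q x => by
        show δ (p.left * act p.right q.left) *
            ((p.right * q.right) * x * (p.right * q.right)⁻¹) =
          δ p.left * (p.right * (δ q.left * (q.right * x * q.right⁻¹)) * p.right⁻¹)
        rw [map_mul, peiffer1]
        group }
  have smul_def : ∀ (p : K) (x : G), p • x = δ p.left * (p.right * x * p.right⁻¹) :=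
    fun _ _ => rfl
  -- equivalence K ≃ H × G
  have eK : K ≃ H × G :=
    ⟨fun p => (p.left, p.right), fun q => ⟨q.1, q.2⟩, fun p => rfl, fun q => rfl⟩
  haveI : Finite K := Finite.of_equiv _ eK.symm
  -- class ≃ orbit
  have e1 : {g' : G // Nat.card {p : H × G // δ p.1 = g * p.2 * g'⁻¹ * p.2⁻¹} ≠ 0} ≃
      MulAction.orbit K g := by
    refine Equiv.subtypeEquivRight fun g' => ?_
    rw [Nat.card_ne_zero]
    constructor
    · rintro ⟨⟨⟨h, k⟩, hp⟩, _⟩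
      have : (⟨h, k⟩ : K) • g' = g := by
        rw [smul_def]; simp only at hp; rw [hp]; group
      exact MulAction.mem_orbit_iff.mpr ⟨(⟨h, k⟩ : K)⁻¹, by rw [← this, inv_smul_smul]⟩
    · rintro ⟨p, hp⟩
      refine ⟨⟨⟨(p⁻¹).left, (p⁻¹).right⟩, ?_⟩, Subtype.finite⟩
      have h2 : p⁻¹ • g' = g := by rw [← hp, inv_smul_smul]
      rw [smul_def] at h2
      simp only
      rw [eq_mul_inv_of_mul_eq h2]; group
  -- stabilizer ≃ pairs
  have e2 : MulAction.stabilizer K g ≃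
      {p : H × G // δ p.1 = g * p.2 * g⁻¹ * p.2⁻¹} := by
    refine ⟨fun p => ⟨(p.1.left, p.1.right), ?_⟩, fun q => ⟨⟨q.1.1, q.1.2⟩, ?_⟩, ?_, ?_⟩
    · have hp := p.2
      rw [MulAction.mem_stabilizer_iff, smul_def] at hp
      simp only
      rw [eq_mul_inv_of_mul_eq hp]; group
    · have hq := q.2
      rw [MulAction.mem_stabilizer_iff, smul_def]
      simp only
      rw [hq]; group
    · intro p; rfl
    · intro q; rfl
  have key := Nat.card_congr (MulAction.orbitProdStabilizerEquivGroup K g)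
  rw [Nat.card_prod] at key
  rw [Nat.card_congr e1, ← Nat.card_congr e2, key, Nat.card_congr eK,
    Nat.card_prod, Nat.mul_comm]
end

section
/- The number of 2-conjugacy classes of G equals (1 / (|G|² |H|²)) · Σ_{g, g₁ ∈ G} C(g, g₁)², i.e. |G|² |H|² · #(2-conjugacy classes) = Σ_{g,g₁ ∈ G} C(g,g₁)². -/
/-- |G|² |H|² · #(2-conjugacy classes) = Σ_{g,g₁ ∈ G} C(g,g₁)². -/
theorem card_twoConjClasses_eq_sum_sq
    {G H : Type*} [Group G] [Group H] [Fintype G] [Fintype H]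
    (δ : H →* G) (act : G →* MulAut H)
    (peiffer1 : ∀ (g : G) (h : H), δ (act g h) = g * δ h * g⁻¹)
    (peiffer2 : ∀ h₁ h₂ : H, act (δ h₁) h₂ = h₁ * h₂ * h₁⁻¹) :
    Nat.card G ^ 2 * Nat.card H ^ 2 *
      Nat.card (Quot (fun g₁ g₂ : G => ∃ (h : H) (k : G), δ h = g₁ * k * g₂⁻¹ * k⁻¹)) =
    ∑ g : G, ∑ g₁ : G,
      Nat.card {p : H × G // δ p.1 = g * p.2 * g₁⁻¹ * p.2⁻¹} ^ 2 := by
  classical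
  -- (H ⋊[act] G) ≃ H × G
  let eK : (H ⋊[act] G) ≃ H × G :=
    { toFun := fun x => (x.left, x.right)
      invFun := fun p => ⟨p.1, p.2⟩
      left_inv := fun x => rfl
      right_inv := fun p => rfl }
  letI : Fintype (H ⋊[act] G) := Fintype.ofEquiv _ eK.symm
  -- the action of (H ⋊[act] G) on G
  letI : SMul (H ⋊[act] G) G := ⟨fun x g => δ x.left * (x.right * g * x.right⁻¹)⟩
  have smul_def : ∀ (x : (H ⋊[act] G)) (g : G), x • g = δ x.left * (x.right * g * x.right⁻¹) :=
    fun _ _ => rfl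
  letI : MulAction (H ⋊[act] G) G :=
    { one_smul := by intro g; simp [smul_def]
      mul_smul := by
        intro x y g
        rcases x with ⟨xl, xr⟩; rcases y with ⟨yl, yr⟩
        simp only [smul_def, SemidirectProduct.mul_left, SemidirectProduct.mul_right,
          map_mul, peiffer1]
        group }
  -- the given relation is the orbit relation
  have hrel : (fun g₁ g₂ : G => ∃ (h : H) (k : G), δ h = g₁ * k * g₂⁻¹ * k⁻¹) =
      (MulAction.orbitRel (H ⋊[act] G) G).r := by
    funext g₁ g₂
    show _ = (g₁ ∈ MulAction.orbit (H ⋊[act] G) g₂)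
    apply propext
    constructor
    · rintro ⟨h, k, hh⟩
      refine ⟨(⟨h, k⟩ : (H ⋊[act] G)), ?_⟩
      show δ h * (k * g₂ * k⁻¹) = g₁
      rw [hh]; group
    · rintro ⟨x, hx⟩
      refine ⟨x.left, x.right, ?_⟩
      have : δ x.left * (x.right * g₂ * x.right⁻¹) = g₁ := hx
      rw [← this]; group
  -- identify C(g,g₁) with counting in (H ⋊[act] G)
  have hC : ∀ g g₁ : G, Nat.card {p : H × G // δ p.1 = g * p.2 * g₁⁻¹ * p.2⁻¹} =
      Nat.card {x : (H ⋊[act] G) // x • g₁ = g} := by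
    intro g g₁
    refine Nat.card_congr (Equiv.subtypeEquiv eK.symm fun p => ?_)
    show δ p.1 = g * p.2 * g₁⁻¹ * p.2⁻¹ ↔ δ p.1 * (p.2 * g₁ * p.2⁻¹) = g
    constructor
    · intro h; rw [h]; group
    · intro h; rw [← h]; group
  -- step 2 : sum over g of squares = pairs with equal action
  have step2 : ∀ g₁ : G, ∑ g : G, Nat.card {x : (H ⋊[act] G) // x • g₁ = g} ^ 2 =
      Nat.card {xy : (H ⋊[act] G) × (H ⋊[act] G) // xy.1 • g₁ = xy.2 • g₁} := by
    intro g₁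
    have e2 : {xy : (H ⋊[act] G) × (H ⋊[act] G) // xy.1 • g₁ = xy.2 • g₁} ≃
        Σ g : G, ({x : (H ⋊[act] G) // x • g₁ = g} × {x : (H ⋊[act] G) // x • g₁ = g}) :=
      { toFun := fun z => ⟨z.1.2 • g₁, ⟨⟨z.1.1, z.2⟩, ⟨z.1.2, rfl⟩⟩⟩
        invFun := fun w => ⟨(w.2.1.1, w.2.2.1), w.2.1.2.trans w.2.2.2.symm⟩
        left_inv := fun z => rfl
        right_inv := by rintro ⟨g, ⟨x, hx⟩, ⟨y, hy⟩⟩; subst hy; rfl }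
    rw [Nat.card_congr e2]
    simp only [Nat.card_eq_fintype_card, Fintype.card_sigma, Fintype.card_prod, sq]
  -- step 3 : pairs with equal action ≃ (H ⋊[act] G) × stabilizer
  have step3 : ∀ g₁ : G, Nat.card {xy : (H ⋊[act] G) × (H ⋊[act] G) // xy.1 • g₁ = xy.2 • g₁} =
      Nat.card (H ⋊[act] G) * Nat.card (MulAction.stabilizer (H ⋊[act] G) g₁) := by
    intro g₁
    rw [← Nat.card_prod]
    refine Nat.card_congr ?_
    exact
      { toFun := fun z => ⟨z.1.2, ⟨z.1.2⁻¹ * z.1.1, by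
          have := z.2
          show (z.1.2⁻¹ * z.1.1) • g₁ = g₁
          rw [mul_smul, this, ← mul_smul, inv_mul_cancel, one_smul]⟩⟩
        invFun := fun w => ⟨(w.1 * w.2.1, w.1), by
          show (w.1 * w.2.1) • g₁ = w.1 • g₁
          rw [mul_smul, w.2.2]⟩
        left_inv := by rintro ⟨⟨x, y⟩, hz⟩; simp
        right_inv := by rintro ⟨y, ⟨s, hs⟩⟩; simp }
  -- step 4 : double counting fixed pairs
  have step4 : ∑ g₁ : G, Nat.card (MulAction.stabilizer (H ⋊[act] G) g₁) =
      ∑ x : (H ⋊[act] G), Nat.card (MulAction.fixedBy G x) := by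
    have e4 : (Σ g₁ : G, MulAction.stabilizer (H ⋊[act] G) g₁) ≃ (Σ x : (H ⋊[act] G), MulAction.fixedBy G x) :=
      { toFun := fun z => ⟨z.2.1, ⟨z.1, z.2.2⟩⟩
        invFun := fun z => ⟨z.2.1, ⟨z.1, z.2.2⟩⟩
        left_inv := fun z => rfl
        right_inv := fun z => rfl }
    have := Fintype.card_congr e4
    simpa only [Fintype.card_sigma, Nat.card_eq_fintype_card] using this
  -- Burnside
  have burnside : (∑ x : (H ⋊[act] G), Fintype.card (MulAction.fixedBy G x)) =
      Fintype.card (Quotient (MulAction.orbitRel (H ⋊[act] G) G)) * Fintype.card (H ⋊[act] G) :=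
    MulAction.sum_card_fixedBy_eq_card_orbits_mul_card_group (H ⋊[act] G) G
  have hcardK : Nat.card (H ⋊[act] G) = Nat.card H * Nat.card G := by
    rw [Nat.card_congr eK, Nat.card_prod]
  calc
    Nat.card G ^ 2 * Nat.card H ^ 2 *
        Nat.card (Quot (fun g₁ g₂ : G => ∃ (h : H) (k : G), δ h = g₁ * k * g₂⁻¹ * k⁻¹)) =
        Nat.card (H ⋊[act] G) * (Nat.card (H ⋊[act] G) * Nat.card (Quotient (MulAction.orbitRel (H ⋊[act] G) G))) := by
      rw [hrel, hcardK]
      show _ * Nat.card (Quot (MulAction.orbitRel (H ⋊[act] G) G).r) = _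
      rw [show Quot (MulAction.orbitRel (H ⋊[act] G) G).r = Quotient (MulAction.orbitRel (H ⋊[act] G) G) from rfl]
      ring
    _ = Nat.card (H ⋊[act] G) * ∑ g₁ : G, Nat.card (MulAction.stabilizer (H ⋊[act] G) g₁) := by
      rw [step4]
      simp only [Nat.card_eq_fintype_card, burnside]
      ring
    _ = ∑ g₁ : G, Nat.card (H ⋊[act] G) * Nat.card (MulAction.stabilizer (H ⋊[act] G) g₁) := by
      rw [Finset.mul_sum]
    _ = ∑ g₁ : G, ∑ g : G, Nat.card {x : (H ⋊[act] G) // x • g₁ = g} ^ 2 := by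
      refine Finset.sum_congr rfl fun g₁ _ => ?_
      rw [step2, step3]
    _ = ∑ g : G, ∑ g₁ : G,
        Nat.card {p : H × G // δ p.1 = g * p.2 * g₁⁻¹ * p.2⁻¹} ^ 2 := by
      rw [Finset.sum_comm]
      exact Finset.sum_congr rfl fun g _ => Finset.sum_congr rfl fun g₁ _ => by rw [hC]
end

section
/- The number of 2-conjugacy classes of G equals the generalized commuting fraction of the 2-group times |G|; equivalently, |G| · |H| · #(2-conjugacy classes) = #{(h, g₁, g₂) ∈ H × G × G : ∂(h) = g₁ g₂ g₁⁻¹ g₂⁻¹}. -/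
/-- Fibers of a homomorphism over a parametrized family of targets: the solutions
`(h, x)` of `δ h = c x` are parametrized by the `x` with `c x` in range, times the kernel. -/
noncomputable def auxFiberEquiv {H G X : Type*} [Group H] [Group G] (δ : H →* G) (c : X → G) :
    {t : H × X // δ t.1 = c t.2} ≃ {x : X // c x ∈ δ.range} × δ.ker where
  toFun t :=
    (⟨t.1.2, ⟨t.1.1, t.2⟩⟩,
     ⟨t.1.1 * (Classical.choose (⟨t.1.1, t.2⟩ : c t.1.2 ∈ δ.range))⁻¹, by
        have hs := Classical.choose_spec (⟨t.1.1, t.2⟩ : c t.1.2 ∈ δ.range)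
        simp [MonoidHom.mem_ker, hs, t.2]⟩)
  invFun p :=
    ⟨(p.2.1 * Classical.choose p.1.2, p.1.1), by
      have hs := Classical.choose_spec p.1.2
      have hk : δ p.2.1 = 1 := p.2.2
      simp [hs, hk]⟩
  left_inv t := by
    obtain ⟨⟨h, x⟩, ht⟩ := t
    apply Subtype.ext
    simp
  right_inv p := by
    obtain ⟨⟨x, hx⟩, k, hk⟩ := p
    simp only [Prod.ext_iff, Subtype.ext_iff]
    refine ⟨trivial, ?_⟩
    group

/-- Pulling back a predicate along a surjective homomorphism: elements `a` with `P (φ a)`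
are parametrized by the elements `b` with `P b`, times the kernel. -/
noncomputable def auxPullbackEquiv {A B : Type*} [Group A] [Group B] (φ : A →* B)
    (hsurj : Function.Surjective φ) (P : B → Prop) :
    {a : A // P (φ a)} ≃ {b : B // P b} × φ.ker where
  toFun a :=
    (⟨φ a.1, a.2⟩,
     ⟨a.1 * (Classical.choose (hsurj (φ a.1)))⁻¹, by
        have hs := Classical.choose_spec (hsurj (φ a.1))
        simp [MonoidHom.mem_ker, hs]⟩)
  invFun p :=
    ⟨p.2.1 * Classical.choose (hsurj p.1.1), by
      have hs := Classical.choose_spec (hsurj p.1.1)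
      have hk : φ p.2.1 = 1 := p.2.2
      simpa [hs, hk] using p.1.2⟩
  left_inv a := by
    obtain ⟨x, hx⟩ := a
    apply Subtype.ext
    simp
  right_inv p := by
    obtain ⟨⟨b, hb⟩, k, hk⟩ := p
    have hs := Classical.choose_spec (hsurj b)
    have hk' : φ k = 1 := hk
    have hφ : φ (k * Classical.choose (hsurj b)) = b := by rw [map_mul, hk', hs, one_mul]
    simp only [Prod.ext_iff, Subtype.ext_iff]
    constructor
    · exact hφ
    · show k * Classical.choose (hsurj b) *
          (Classical.choose (hsurj (φ (k * Classical.choose (hsurj b)))))⁻¹ = k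
      rw [hφ]
      group

/-- |G| · |H| · #(2-conjugacy classes) = #{(h,g₁,g₂) : ∂h = [g₁, g₂]}. -/
theorem card_twoConjClasses_eq_gcf
    {G H : Type*} [Group G] [Group H] [Finite G] [Finite H]
    (δ : H →* G) (act : G →* MulAut H)
    (peiffer1 : ∀ (g : G) (h : H), δ (act g h) = g * δ h * g⁻¹)
    (peiffer2 : ∀ h₁ h₂ : H, act (δ h₁) h₂ = h₁ * h₂ * h₁⁻¹) :
    Nat.card G * Nat.card H *
      Nat.card (Quot (fun g₁ g₂ : G => ∃ (h : H) (k : G), δ h = g₁ * k * g₂⁻¹ * k⁻¹)) =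
    Nat.card {t : H × G × G // δ t.1 = t.2.1 * t.2.2 * t.2.1⁻¹ * t.2.2⁻¹} := by
  classical
  set N : Subgroup G := δ.range with hN
  haveI hNnormal : N.Normal := by
    constructor
    rintro _ ⟨h, rfl⟩ g
    exact ⟨act g h, peiffer1 g h⟩
  set π : G →* G ⧸ N := QuotientGroup.mk' N with hπ
  have hπsurj : Function.Surjective π := QuotientGroup.mk'_surjective N
  have hker : ∀ g : G, π g = 1 ↔ g ∈ N := fun g => QuotientGroup.eq_one_iff g
  -- Step 1: the quotient by 2-conjugacy is in bijection with conjugacy classes of G ⧸ N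
  set r : G → G → Prop := fun g₁ g₂ => ∃ (h : H) (k : G), δ h = g₁ * k * g₂⁻¹ * k⁻¹ with hr
  have key : ∀ g₁ g₂ : G, r g₁ g₂ ↔ IsConj (π g₁) (π g₂) := by
    intro g₁ g₂
    constructor
    · rintro ⟨h, k, hk⟩
      have h1 : π (δ h) = 1 := (hker _).2 ⟨h, rfl⟩
      have hg₂ : g₂ = k⁻¹ * (δ h)⁻¹ * g₁ * k := by rw [hk]; group
      refine ⟨⟨π k⁻¹, π k, by simp, by simp⟩, ?_⟩
      show π k⁻¹ * π g₁ = π g₂ * π k⁻¹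
      rw [hg₂, map_mul, map_mul, map_mul, map_inv, map_inv, h1]
      group
    · rintro ⟨u, hc⟩
      obtain ⟨k, hk⟩ := hπsurj (u : G ⧸ N)
      have hc' : (u : G ⧸ N) * π g₁ = π g₂ * (u : G ⧸ N) := hc
      have h2 : π (k * g₁ * k⁻¹ * g₂⁻¹) = 1 := by
        rw [map_mul, map_mul, map_mul, map_inv, map_inv, hk, hc']
        group
      obtain ⟨h, hh⟩ := (hker _).1 h2
      refine ⟨act k⁻¹ h, k⁻¹, ?_⟩
      rw [peiffer1, hh]; group
  have e1 : Quot r ≃ ConjClasses (G ⧸ N) := by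
    refine Equiv.ofBijective
      (Quot.lift (fun g => ConjClasses.mk (π g)) ?_) ⟨?_, ?_⟩
    · intro a b hab
      exact (ConjClasses.mk_eq_mk_iff_isConj).2 ((key a b).1 hab)
    · intro x y
      induction x using Quot.ind with | _ a =>
      induction y using Quot.ind with | _ b =>
      intro hab
      exact Quot.sound ((key a b).2 (ConjClasses.mk_eq_mk_iff_isConj.1 hab))
    · intro q
      obtain ⟨x, rfl⟩ := ConjClasses.mk_surjective q
      obtain ⟨g, rfl⟩ := hπsurj x
      exact ⟨Quot.mk r g, rfl⟩
  -- Step 2: count the triples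
  set φ : G × G →* (G ⧸ N) × (G ⧸ N) := π.prodMap π with hφ
  have hφsurj : Function.Surjective φ := Function.Surjective.prodMap hπsurj hπsurj
  have e2 : {t : H × G × G // δ t.1 = t.2.1 * t.2.2 * t.2.1⁻¹ * t.2.2⁻¹} ≃
      {p : G × G // p.1 * p.2 * p.1⁻¹ * p.2⁻¹ ∈ δ.range} × δ.ker :=
    auxFiberEquiv δ (fun p : G × G => p.1 * p.2 * p.1⁻¹ * p.2⁻¹)
  have e3 : {p : G × G // p.1 * p.2 * p.1⁻¹ * p.2⁻¹ ∈ δ.range} ≃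
      {p : G × G // Commute (φ p).1 (φ p).2} := by
    apply Equiv.subtypeEquivRight
    intro p
    rw [← hker]
    open scoped commutatorElement in
    have hcomm : p.1 * p.2 * p.1⁻¹ * p.2⁻¹ = ⁅p.1, p.2⁆ := (commutatorElement_def p.1 p.2).symm
    open scoped commutatorElement in
    rw [hcomm, map_commutatorElement, commutatorElement_eq_one_iff_commute]
    exact Iff.rfl
  have e4 : {p : G × G // Commute (φ p).1 (φ p).2} ≃
      {q : (G ⧸ N) × (G ⧸ N) // Commute q.1 q.2} × φ.ker :=
    auxPullbackEquiv φ hφsurj (fun q => Commute q.1 q.2)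
  have hkerφ : φ.ker = N.prod N := by
    ext p
    constructor
    · intro hp
      have h1 : φ p = 1 := hp
      exact Subgroup.mem_prod.2
        ⟨(hker p.1).1 (congrArg Prod.fst h1), (hker p.2).1 (congrArg Prod.snd h1)⟩
    · intro hp
      obtain ⟨hp1, hp2⟩ := Subgroup.mem_prod.1 hp
      show φ p = 1
      show (π p.1, π p.2) = ((1 : G ⧸ N), (1 : G ⧸ N))
      rw [(hker p.1).2 hp1, (hker p.2).2 hp2]
  have e5 : (φ.ker : Type _) ≃ N × N := by
    rw [hkerφ]
    exact (Subgroup.prodEquiv N N).toEquiv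
  -- now count
  have hcard2 : Nat.card {t : H × G × G // δ t.1 = t.2.1 * t.2.2 * t.2.1⁻¹ * t.2.2⁻¹} =
      (Nat.card (ConjClasses (G ⧸ N)) * Nat.card (G ⧸ N)) *
        (Nat.card N * Nat.card N) * Nat.card δ.ker := by
    rw [Nat.card_congr e2, Nat.card_prod, Nat.card_congr e3, Nat.card_congr e4, Nat.card_prod,
      Nat.card_congr e5, Nat.card_prod, card_comm_eq_card_conjClasses_mul_card]
  have hG : Nat.card G = Nat.card (G ⧸ N) * Nat.card N :=
    Subgroup.card_eq_card_quotient_mul_card_subgroup N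
  have hH : Nat.card H = Nat.card (H ⧸ δ.ker) * Nat.card δ.ker :=
    Subgroup.card_eq_card_quotient_mul_card_subgroup δ.ker
  have hHq : Nat.card (H ⧸ δ.ker) = Nat.card N :=
    Nat.card_congr (QuotientGroup.quotientKerEquivRange δ).toEquiv
  rw [Nat.card_congr e1, hcard2, hG, hH, hHq]
  ring
end

section
/- #{(h, g₁, g₂) ∈ H × G × G : ∂(h) = g₁ g₂ g₁⁻¹ g₂⁻¹} · |G| · |H| = Σ_{g₁, g₂ ∈ G} C(g₁, g₂)², where C(g₁, g₂) = #{(h,k) ∈ H × G : ∂(h) = g₁ k g₂⁻¹ k⁻¹}. -/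
/-- #{(h,g₁,g₂) : ∂h = [g₁,g₂]} · |G| · |H| = Σ_{g₁,g₂} C(g₁,g₂)². -/
theorem card_commutator_mul_eq_sum_sq
    {G H : Type*} [Group G] [Group H] [Fintype G] [Fintype H]
    (δ : H →* G) (act : G →* MulAut H)
    (peiffer1 : ∀ (g : G) (h : H), δ (act g h) = g * δ h * g⁻¹)
    (peiffer2 : ∀ h₁ h₂ : H, act (δ h₁) h₂ = h₁ * h₂ * h₁⁻¹) :
    Nat.card {t : H × G × G // δ t.1 = t.2.1 * t.2.2 * t.2.1⁻¹ * t.2.2⁻¹} *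
      Nat.card G * Nat.card H =
    ∑ g₁ : G, ∑ g₂ : G,
      Nat.card {p : H × G // δ p.1 = g₁ * p.2 * g₂⁻¹ * p.2⁻¹} ^ 2 := by
  classical
  -- main bijection
  have e : {q : (G × G) × ((H × G) × (H × G)) //
        δ q.2.1.1 = q.1.1 * q.2.1.2 * q.1.2⁻¹ * q.2.1.2⁻¹ ∧
        δ q.2.2.1 = q.1.1 * q.2.2.2 * q.1.2⁻¹ * q.2.2.2⁻¹} ≃
      {t : H × G × G // δ t.1 = t.2.1 * t.2.2 * t.2.1⁻¹ * t.2.2⁻¹} × (G × H) :=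
    { toFun := fun ⟨⟨⟨g₁, g₂⟩, ⟨h, k⟩, h', k'⟩, hq⟩ =>
        (⟨(act k'⁻¹ (h'⁻¹ * h), g₂, k'⁻¹ * k), by
          obtain ⟨h1, h2⟩ := hq
          dsimp only at h1 h2 ⊢
          rw [peiffer1, map_mul, map_inv, h1, h2]
          group⟩, (k', h'))
      invFun := fun ⟨⟨⟨v, g₂, a⟩, hv⟩, k', h'⟩ =>
        ⟨⟨(δ h' * (k' * g₂ * k'⁻¹), g₂), ⟨h' * act k' v, k' * a⟩, h', k'⟩, by
          refine ⟨?_, by group⟩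
          simp only [map_mul, peiffer1, hv]
          group⟩
      left_inv := fun ⟨⟨⟨g₁, g₂⟩, ⟨h, k⟩, h', k'⟩, hq⟩ => by
        obtain ⟨h1, h2⟩ := hq
        have hact : ∀ x : H, act k' (act k'⁻¹ x) = x := by
          intro x
          rw [← MulAut.mul_apply, ← map_mul, mul_inv_cancel, map_one, MulAut.one_apply]
        ext
        · simp [h2]; group
        · rfl
        · simp [hact]
        · simp
        · rfl
        · rfl
      right_inv := fun ⟨⟨⟨v, g₂, a⟩, hv⟩, k', h'⟩ => by
        have hact : ∀ x : H, act k'⁻¹ (act k' x) = x := by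
          intro x
          rw [← MulAut.mul_apply, ← map_mul, inv_mul_cancel, map_one, MulAut.one_apply]
        ext
        · simp [hact]
        · rfl
        · simp
        · rfl
        · rfl }
  simp only [Nat.card_eq_fintype_card]
  calc Fintype.card {t : H × G × G // δ t.1 = t.2.1 * t.2.2 * t.2.1⁻¹ * t.2.2⁻¹} *
        Fintype.card G * Fintype.card H
      = Fintype.card ({t : H × G × G // δ t.1 = t.2.1 * t.2.2 * t.2.1⁻¹ * t.2.2⁻¹} × (G × H)) := by
        simp [Fintype.card_prod, mul_assoc]
    _ = Fintype.card {q : (G × G) × ((H × G) × (H × G)) //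
          δ q.2.1.1 = q.1.1 * q.2.1.2 * q.1.2⁻¹ * q.2.1.2⁻¹ ∧
          δ q.2.2.1 = q.1.1 * q.2.2.2 * q.1.2⁻¹ * q.2.2.2⁻¹} := (Fintype.card_congr e).symm
    _ = Fintype.card (Σ g : G × G, {pq : (H × G) × (H × G) //
          δ pq.1.1 = g.1 * pq.1.2 * g.2⁻¹ * pq.1.2⁻¹ ∧
          δ pq.2.1 = g.1 * pq.2.2 * g.2⁻¹ * pq.2.2⁻¹}) :=
        Fintype.card_congr (Equiv.subtypeProdEquivSigmaSubtype
          (fun (g : G × G) (pq : (H × G) × (H × G)) =>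
            δ pq.1.1 = g.1 * pq.1.2 * g.2⁻¹ * pq.1.2⁻¹ ∧
            δ pq.2.1 = g.1 * pq.2.2 * g.2⁻¹ * pq.2.2⁻¹))
    _ = ∑ g : G × G, Fintype.card {pq : (H × G) × (H × G) //
          δ pq.1.1 = g.1 * pq.1.2 * g.2⁻¹ * pq.1.2⁻¹ ∧
          δ pq.2.1 = g.1 * pq.2.2 * g.2⁻¹ * pq.2.2⁻¹} := Fintype.card_sigma
    _ = ∑ g₁ : G, ∑ g₂ : G,
          Fintype.card {p : H × G // δ p.1 = g₁ * p.2 * g₂⁻¹ * p.2⁻¹} ^ 2 := by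
        rw [Fintype.sum_prod_type]
        refine Finset.sum_congr rfl fun g₁ _ => Finset.sum_congr rfl fun g₂ _ => ?_
        dsimp only
        rw [Fintype.card_congr (Equiv.subtypeProdEquivProd
          (p := fun p : H × G => δ p.1 = g₁ * p.2 * g₂⁻¹ * p.2⁻¹)
          (q := fun p : H × G => δ p.1 = g₁ * p.2 * g₂⁻¹ * p.2⁻¹)), Fintype.card_prod, sq]
end
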